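/- arXiv:math-ph/0310021 — 5 statements merged into one kernel-verified Lean document; each statement's English description precedes it below -/
import Mathlib

section
/- (Imaginary part of the second-order tadpole in two dimensions at E = 1.) Let κ : ℝ² → ℝ be a smooth compactly supported function with 0 ≤ κ ≤ 1 which is identically 1 on a neighborhood of the unit circle {p : |p| = 1}. Then lim_{ε→0⁺} Im ∫_{ℝ²} κ(p) / (|p|² − 1 − iε) dp = π². -/
open MeasureTheory Filter Set Real

noncomputable section

local notation "E2" => EuclideanSpace ℝ (Fin 2)

lemma poisson_limit (f : ℝ → ℝ) (hf : Continuous f) (M : ℝ) (hM : ∀ x, |f x| ≤ M) :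
    Tendsto (fun ε : ℝ => ∫ u : ℝ, f u * (ε / ((u - 1) ^ 2 + ε ^ 2)))
      (nhdsWithin 0 (Set.Ioi 0)) (nhds (π * f 1)) := by
  have key : ∀ ε : ℝ, 0 < ε →
      (∫ u : ℝ, f u * (ε / ((u - 1) ^ 2 + ε ^ 2)))
        = ∫ t : ℝ, f (1 + ε * t) * (1 + t ^ 2)⁻¹ := by
    intro ε hε
    set g : ℝ → ℝ := fun u => f u * (ε / ((u - 1) ^ 2 + ε ^ 2)) with hg
    have h1 : (∫ u : ℝ, g u) = ∫ u : ℝ, g (1 + u) :=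
      (integral_add_left_eq_self g 1).symm
    have h2 : (∫ t : ℝ, g (1 + ε * t)) = |ε⁻¹| • ∫ u : ℝ, g (1 + u) :=
      MeasureTheory.Measure.integral_comp_mul_left (fun u => g (1 + u)) ε
    have h3 : (∫ u : ℝ, g (1 + u)) = ε * ∫ t : ℝ, g (1 + ε * t) := by
      rw [h2, abs_of_pos (inv_pos.mpr hε), smul_eq_mul, ← mul_assoc,
        mul_inv_cancel₀ hε.ne', one_mul]
    have h4 : ∀ t : ℝ, ε * g (1 + ε * t) = f (1 + ε * t) * (1 + t ^ 2)⁻¹ := by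
      intro t
      have ht : (1 + ε * t - 1) ^ 2 + ε ^ 2 = ε ^ 2 * (t ^ 2 + 1) := by ring
      have hpos : (0:ℝ) < t ^ 2 + 1 := by positivity
      rw [hg]; simp only
      rw [ht]
      field_simp
      ring
    rw [h1, h3, ← MeasureTheory.integral_const_mul]
    exact integral_congr_ae (Filter.Eventually.of_forall h4)
  have hdom : Tendsto (fun ε : ℝ => ∫ t : ℝ, f (1 + ε * t) * (1 + t ^ 2)⁻¹)
      (nhdsWithin 0 (Set.Ioi 0)) (nhds (π * f 1)) := by
    have hlim : (∫ t : ℝ, f 1 * (1 + t ^ 2)⁻¹) = π * f 1 := by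
      rw [MeasureTheory.integral_const_mul, integral_univ_inv_one_add_sq]; ring
    rw [← hlim]
    apply MeasureTheory.tendsto_integral_filter_of_dominated_convergence
      (fun t => M * (1 + t ^ 2)⁻¹)
    · filter_upwards with ε
      exact (hf.comp (by continuity)).aestronglyMeasurable.mul
        ((continuous_const.add (continuous_pow 2)).inv₀
          (fun t => by positivity : ∀ t : ℝ, (1:ℝ) + t ^ 2 ≠ 0)).aestronglyMeasurable
    · filter_upwards with ε
      filter_upwards with t
      have h1 : (0:ℝ) < 1 + t ^ 2 := by positivity
      rw [Real.norm_eq_abs, abs_mul, abs_of_pos (inv_pos.mpr h1)]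
      exact mul_le_mul_of_nonneg_right (hM _) (inv_pos.mpr h1).le
    · exact integrable_inv_one_add_sq.const_mul M
    · filter_upwards with t
      have h1 : Tendsto (fun ε : ℝ => 1 + ε * t) (nhdsWithin 0 (Set.Ioi 0)) (nhds 1) := by
        have : Tendsto (fun ε : ℝ => 1 + ε * t) (nhds 0) (nhds (1 + 0 * t)) :=
          (continuous_const.add (continuous_id.mul continuous_const)).tendsto 0
        simpa using this.mono_left nhdsWithin_le_nhds
      exact ((hf.tendsto 1).comp h1).mul tendsto_const_nhds
  refine hdom.congr' ?_
  filter_upwards [self_mem_nhdsWithin] with ε hε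
  exact (key ε hε).symm

lemma im_eq (κ : E2 → ℝ) (hκ : Continuous κ) (hκc : HasCompactSupport κ)
    (ε : ℝ) (hε : 0 < ε) :
    (∫ p : E2, (κ p : ℂ) / ((‖p‖ ^ 2 : ℝ) - 1 - ε * Complex.I)).im
      = ∫ p : E2, κ p * (ε / ((‖p‖ ^ 2 - 1) ^ 2 + ε ^ 2)) := by
  set d : E2 → ℂ := fun p => ((‖p‖ ^ 2 : ℝ) : ℂ) - 1 - ε * Complex.I with hd
  have him0 : ∀ p, (d p).im = -ε := by
    intro p; simp [hd, pow_two]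
  have hdne : ∀ p, d p ≠ 0 := by
    intro p h
    have h2 := him0 p
    rw [h] at h2
    simp at h2
    exact hε.ne h2.symm
  have hcont : Continuous (fun p : E2 => (κ p : ℂ) / d p) := by
    apply (Complex.continuous_ofReal.comp hκ).div
    · exact ((Complex.continuous_ofReal.comp ((continuous_norm).pow 2)).sub
        continuous_const).sub continuous_const
    · exact hdne
  have hcs : HasCompactSupport (fun p : E2 => (κ p : ℂ) / d p) := by
    have h1 : HasCompactSupport (fun p : E2 => (κ p : ℂ)) :=
      hκc.comp_left (g := fun x : ℝ => (x : ℂ)) (by simp)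
    have h2 : (fun p : E2 => (κ p : ℂ) / d p)
        = (fun p : E2 => (κ p : ℂ)) * (fun p => (d p)⁻¹) := by
      funext p; simp [div_eq_mul_inv]
    rw [h2]
    exact h1.mul_right
  have hint : Integrable (fun p : E2 => (κ p : ℂ) / d p) :=
    hcont.integrable_of_hasCompactSupport hcs
  rw [show (∫ p : E2, (κ p : ℂ) / ((‖p‖ ^ 2 : ℝ) - 1 - ε * Complex.I)).im
      = RCLike.im (∫ p : E2, (κ p : ℂ) / d p) from rfl, ← integral_im hint]
  apply integral_congr_ae
  filter_upwards with p
  have hpos : (0:ℝ) < (‖p‖ ^ 2 - 1) ^ 2 + ε ^ 2 := by positivity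
  have him : (d p).im = -ε := him0 p
  have hre : (d p).re = ‖p‖ ^ 2 - 1 := by simp [hd, pow_two]
  have hns : Complex.normSq (d p) = (‖p‖ ^ 2 - 1) ^ 2 + ε ^ 2 := by
    rw [Complex.normSq_apply, hre, him]; ring
  show ((κ p : ℂ) / d p).im = _
  rw [Complex.div_im, hns, hre, him]
  simp
  ring

lemma volume_unit_ball_E2 : (volume (Metric.ball (0 : E2) 1)).toReal = π := by
  rw [EuclideanSpace.volume_ball]
  simp only [Fintype.card_fin]
  rw [show ((2:ℕ) : ℝ) / 2 + 1 = 2 by norm_num, Real.Gamma_two]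
  rw [show Real.sqrt π ^ 2 = π from Real.sq_sqrt Real.pi_pos.le]
  simp [ENNReal.toReal_ofReal Real.pi_pos.le]

lemma radial_eq (ψ : ℝ → ℝ) (hψ0 : ∀ u ≤ (0:ℝ), ψ u = 0) (ε : ℝ) :
    (∫ p : E2, ψ (‖p‖ ^ 2) * (ε / ((‖p‖ ^ 2 - 1) ^ 2 + ε ^ 2)))
      = π * ∫ u : ℝ, ψ u * (ε / ((u - 1) ^ 2 + ε ^ 2)) := by
  set g : ℝ → ℝ := fun u => ψ u * (ε / ((u - 1) ^ 2 + ε ^ 2)) with hg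
  have step1 : (∫ p : E2, ψ (‖p‖ ^ 2) * (ε / ((‖p‖ ^ 2 - 1) ^ 2 + ε ^ 2)))
      = ∫ p : E2, (fun r : ℝ => g (r ^ 2)) ‖p‖ := rfl
  rw [step1, integral_fun_norm_addHaar (volume : Measure E2) (fun r : ℝ => g (r ^ 2))]
  rw [finrank_euclideanSpace_fin, measureReal_def, volume_unit_ball_E2]
  have step2 : (∫ y in Ioi (0:ℝ), y ^ (2 - 1) • g (y ^ 2))
      = 2⁻¹ * ∫ u in Ioi (0:ℝ), g u := by
    rw [← integral_comp_rpow_Ioi_of_pos (g := g) (p := 2) two_pos]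
    rw [← MeasureTheory.integral_const_mul]
    apply setIntegral_congr_fun measurableSet_Ioi
    intro x hx
    have h1 : x ^ ((2:ℝ) - 1) = x := by
      rw [show (2:ℝ) - 1 = 1 by norm_num, Real.rpow_one]
    have h2 : x ^ (2:ℝ) = x ^ 2 := by
      rw [show (2:ℝ) = ((2:ℕ):ℝ) by norm_num, Real.rpow_natCast]
    simp only [pow_one, smul_eq_mul, h1, h2]
    ring
  rw [step2]
  have step3 : (∫ u in Ioi (0:ℝ), g u) = ∫ u : ℝ, g u := by
    apply setIntegral_eq_integral_of_forall_compl_eq_zero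
    intro u hu
    have : u ≤ 0 := by simpa using hu
    simp [hg, hψ0 u this]
  rw [step3]
  simp only [smul_eq_mul, nsmul_eq_mul, Nat.cast_ofNat]
  ring

/-- imaginary part of the second-order tadpole in two dimensions
at `E = 1`. If `κ : ℝ² → ℝ` is smooth, compactly supported, with `0 ≤ κ ≤ 1`,
and identically `1` on a neighborhood of the unit circle, then
`lim_{ε→0⁺} Im ∫_{ℝ²} κ(p)/(|p|² - 1 - iε) dp = π²`. -/
theorem tadpole_imaginary_part
    (κ : EuclideanSpace ℝ (Fin 2) → ℝ)
    (hκs : ContDiff ℝ (⊤ : ℕ∞) κ) (hκc : HasCompactSupport κ)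
    (hκ0 : ∀ p, 0 ≤ κ p) (hκ1 : ∀ p, κ p ≤ 1)
    (hcirc : ∃ U : Set (EuclideanSpace ℝ (Fin 2)), IsOpen U ∧
      Metric.sphere (0 : EuclideanSpace ℝ (Fin 2)) 1 ⊆ U ∧ ∀ p ∈ U, κ p = 1) :
    Tendsto
      (fun ε : ℝ =>
        (∫ p : EuclideanSpace ℝ (Fin 2),
          (κ p : ℂ) / ((‖p‖ ^ 2 : ℝ) - 1 - ε * Complex.I)).im)
      (nhdsWithin 0 (Set.Ioi 0))
      (nhds (Real.pi ^ 2)) := by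
  obtain ⟨U, hUo, hUs, hU1⟩ := hcirc
  have hκcont : Continuous κ := hκs.continuous
  obtain ⟨δ, hδpos, hδU⟩ :=
    (isCompact_sphere (0 : E2) 1).exists_thickening_subset_open hUo hUs
  set b : ℝ := min (δ / 4) 4⁻¹ with hb
  have hbpos : 0 < b := lt_min (by linarith) (by norm_num)
  have hbδ : b ≤ δ / 4 := min_le_left _ _
  have hb4 : b ≤ 4⁻¹ := min_le_right _ _
  have hb2 : 2 * b ≤ 2⁻¹ := by
    calc 2 * b ≤ 2 * 4⁻¹ := by linarith
    _ = 2⁻¹ := by norm_num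
  -- points with |‖p‖² - 1| ≤ 2b are in U
  have hUann : ∀ p : E2, |‖p‖ ^ 2 - 1| ≤ 2 * b → p ∈ U := by
    intro p hp
    have hx2 : (2:ℝ)⁻¹ ≤ ‖p‖ ^ 2 := by
      have := abs_le.mp hp
      nlinarith
    have hnp : 0 < ‖p‖ := by
      by_contra h
      push_neg at h
      have : ‖p‖ = 0 := le_antisymm h (norm_nonneg p)
      rw [this] at hx2; norm_num at hx2
    have hkey : |‖p‖ - 1| ≤ |‖p‖ ^ 2 - 1| := by
      have h1 : ‖p‖ ^ 2 - 1 = (‖p‖ - 1) * (‖p‖ + 1) := by ring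
      rw [h1, abs_mul, abs_of_pos (by linarith : (0:ℝ) < ‖p‖ + 1)]
      nlinarith [abs_nonneg (‖p‖ - 1)]
    set q : E2 := ‖p‖⁻¹ • p with hq
    have hqs : q ∈ Metric.sphere (0 : E2) 1 := by
      rw [mem_sphere_zero_iff_norm, hq, norm_smul, norm_inv, norm_norm,
        inv_mul_cancel₀ hnp.ne']
    have hdist : dist p q = |‖p‖ - 1| := by
      rw [dist_eq_norm, hq, show p - ‖p‖⁻¹ • p = (1 - ‖p‖⁻¹) • p by
        rw [sub_smul, one_smul], norm_smul, Real.norm_eq_abs]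
      rw [show |1 - ‖p‖⁻¹| * ‖p‖ = |(1 - ‖p‖⁻¹) * ‖p‖| by
        rw [abs_mul, abs_of_pos hnp]]
      congr 1
      field_simp
    apply hδU
    rw [Metric.mem_thickening_iff]
    exact ⟨q, hqs, by
      rw [hdist]
      calc |‖p‖ - 1| ≤ |‖p‖ ^ 2 - 1| := hkey
      _ ≤ 2 * b := hp
      _ ≤ δ / 2 := by linarith
      _ < δ := by linarith⟩
  -- the radial cutoff
  set ψ : ℝ → ℝ := fun u => max 0 (min 1 ((2 * b - |u - 1|) * b⁻¹)) with hψ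
  have hψc : Continuous ψ := by
    apply continuous_const.max
    apply continuous_const.min
    exact (continuous_const.sub (continuous_id.sub continuous_const).abs).mul continuous_const
  have hψnn : ∀ u, 0 ≤ ψ u := fun u => le_max_left _ _
  have hψle : ∀ u, ψ u ≤ 1 := fun u => max_le zero_le_one (min_le_left _ _)
  have hψone : ∀ u : ℝ, |u - 1| ≤ b → ψ u = 1 := by
    intro u hu
    have h1 : (1:ℝ) ≤ (2 * b - |u - 1|) * b⁻¹ := by
      have h2 := mul_le_mul_of_nonneg_right (show b ≤ 2 * b - |u - 1| by linarith)
        (inv_nonneg.mpr hbpos.le)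
      rwa [mul_inv_cancel₀ hbpos.ne'] at h2
    rw [hψ]
    simp only
    rw [min_eq_left h1, max_eq_right zero_le_one]
  have hψzero : ∀ u : ℝ, 2 * b ≤ |u - 1| → ψ u = 0 := by
    intro u hu
    have h1 : (2 * b - |u - 1|) * b⁻¹ ≤ 0 :=
      mul_nonpos_of_nonpos_of_nonneg (by linarith) (inv_nonneg.mpr hbpos.le)
    rw [hψ]
    simp only
    rw [max_eq_left]
    exact le_trans (min_le_right _ _) h1
  have hψzero' : ∀ u : ℝ, u ≤ 0 → ψ u = 0 := by
    intro u hu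
    apply hψzero
    rw [abs_sub_comm, abs_of_pos (by linarith : (0:ℝ) < 1 - u)]
    linarith
  have hψ1 : ψ 1 = 1 := hψone 1 (by simp [hbpos.le])
  -- difference vanishes near the circle
  have hdiff0 : ∀ p : E2, |‖p‖ ^ 2 - 1| ≤ b → κ p - ψ (‖p‖ ^ 2) = 0 := by
    intro p hp
    rw [hU1 p (hUann p (le_trans hp (by linarith))), hψone _ hp]
    ring
  -- continuity and integrability machinery, for fixed ε > 0
  have Pcont : ∀ ε : ℝ, 0 < ε →
      Continuous (fun p : E2 => ε / ((‖p‖ ^ 2 - 1) ^ 2 + ε ^ 2)) := by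
    intro ε hε
    apply continuous_const.div
    · exact (((continuous_norm.pow 2).sub continuous_const).pow 2).add continuous_const
    · intro p; positivity
  have hbig : ∀ p : E2, p ∉ Metric.closedBall (0 : E2) 2 → ψ (‖p‖ ^ 2) = 0 := by
    intro p hp
    have h1 : 2 < ‖p‖ := by
      simpa only [Metric.mem_closedBall, dist_zero_right, not_le] using hp
    apply hψzero
    rw [abs_of_pos (by nlinarith : (0:ℝ) < ‖p‖ ^ 2 - 1)]
    nlinarith
  have hχcs : ∀ ε : ℝ, HasCompactSupport
      (fun p : E2 => ψ (‖p‖ ^ 2) * (ε / ((‖p‖ ^ 2 - 1) ^ 2 + ε ^ 2))) := by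
    intro ε
    apply HasCompactSupport.intro (isCompact_closedBall (0 : E2) 2)
    intro p hp
    rw [hbig p hp, zero_mul]
  have hInt : ∀ ε : ℝ, 0 < ε →
      Integrable (fun p : E2 => κ p * (ε / ((‖p‖ ^ 2 - 1) ^ 2 + ε ^ 2))) :=
    fun ε hε => (hκcont.mul (Pcont ε hε)).integrable_of_hasCompactSupport hκc.mul_right
  have hIntχ : ∀ ε : ℝ, 0 < ε →
      Integrable (fun p : E2 => ψ (‖p‖ ^ 2) * (ε / ((‖p‖ ^ 2 - 1) ^ 2 + ε ^ 2))) :=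
    fun ε hε => ((hψc.comp (continuous_norm.pow 2)).mul
      (Pcont ε hε)).integrable_of_hasCompactSupport (hχcs ε)
  set Rad : ℝ → ℝ :=
    fun ε => ∫ p : E2, ψ (‖p‖ ^ 2) * (ε / ((‖p‖ ^ 2 - 1) ^ 2 + ε ^ 2)) with hRad
  set Err : ℝ → ℝ :=
    fun ε => ∫ p : E2, (κ p - ψ (‖p‖ ^ 2)) * (ε / ((‖p‖ ^ 2 - 1) ^ 2 + ε ^ 2)) with hErr
  have hsplitfun : ∀ ε : ℝ,
      (fun p : E2 => (κ p - ψ (‖p‖ ^ 2)) * (ε / ((‖p‖ ^ 2 - 1) ^ 2 + ε ^ 2)))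
      = (fun p : E2 => κ p * (ε / ((‖p‖ ^ 2 - 1) ^ 2 + ε ^ 2)))
        - (fun p : E2 => ψ (‖p‖ ^ 2) * (ε / ((‖p‖ ^ 2 - 1) ^ 2 + ε ^ 2))) := by
    intro ε
    funext p
    simp only [Pi.sub_apply]
    ring
  have hIntErr : ∀ ε : ℝ, 0 < ε →
      Integrable (fun p : E2 => (κ p - ψ (‖p‖ ^ 2)) * (ε / ((‖p‖ ^ 2 - 1) ^ 2 + ε ^ 2))) := by
    intro ε hε
    rw [hsplitfun ε]
    exact (hInt ε hε).sub (hIntχ ε hε)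
  have hsplit : ∀ ε : ℝ, 0 < ε →
      (∫ p : E2, κ p * (ε / ((‖p‖ ^ 2 - 1) ^ 2 + ε ^ 2))) = Rad ε + Err ε := by
    intro ε hε
    rw [hRad, hErr]
    simp only
    rw [← integral_add (hIntχ ε hε) (hIntErr ε hε)]
    apply integral_congr_ae
    filter_upwards with p
    ring
  -- error bound
  set K : Set E2 := tsupport κ ∪ Metric.closedBall (0 : E2) 2 with hK
  have hKc : IsCompact K := hκc.union (isCompact_closedBall _ _)
  set V : ℝ := (volume K).toReal with hV
  have hErrbound : ∀ ε : ℝ, 0 < ε → |Err ε| ≤ ε / b ^ 2 * V := by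
    intro ε hε
    have hzero : ∀ p : E2, p ∉ K →
        (κ p - ψ (‖p‖ ^ 2)) * (ε / ((‖p‖ ^ 2 - 1) ^ 2 + ε ^ 2)) = 0 := by
      intro p hp
      rw [hK, Set.mem_union] at hp
      push_neg at hp
      rw [image_eq_zero_of_notMem_tsupport hp.1, hbig p hp.2, sub_zero, zero_mul]
    have hbound : ∀ p ∈ K,
        ‖(κ p - ψ (‖p‖ ^ 2)) * (ε / ((‖p‖ ^ 2 - 1) ^ 2 + ε ^ 2))‖ ≤ ε / b ^ 2 := by
      intro p _
      rcases le_or_gt |‖p‖ ^ 2 - 1| b with h | h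
      · rw [hdiff0 p h, zero_mul, norm_zero]
        positivity
      · have h1 : |κ p - ψ (‖p‖ ^ 2)| ≤ 1 :=
          abs_le.2 ⟨by linarith [hκ0 p, hψle (‖p‖ ^ 2)], by linarith [hκ1 p, hψnn (‖p‖ ^ 2)]⟩
        have h2 : b ^ 2 ≤ (‖p‖ ^ 2 - 1) ^ 2 + ε ^ 2 := by
          have h3 : b ^ 2 ≤ (‖p‖ ^ 2 - 1) ^ 2 := by
            have := sq_abs (‖p‖ ^ 2 - 1)
            nlinarith [abs_nonneg (‖p‖ ^ 2 - 1)]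
          nlinarith
        have h4 : ε / ((‖p‖ ^ 2 - 1) ^ 2 + ε ^ 2) ≤ ε / b ^ 2 :=
          div_le_div_of_nonneg_left hε.le (by positivity) h2
        rw [Real.norm_eq_abs, abs_mul,
          abs_of_pos (show (0:ℝ) < ε / ((‖p‖ ^ 2 - 1) ^ 2 + ε ^ 2) by positivity)]
        calc |κ p - ψ (‖p‖ ^ 2)| * (ε / ((‖p‖ ^ 2 - 1) ^ 2 + ε ^ 2))
            ≤ 1 * (ε / b ^ 2) := by
              apply mul_le_mul h1 h4 (by positivity) zero_le_one
        _ = ε / b ^ 2 := one_mul _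
    have heq : Err ε = ∫ p in K, (κ p - ψ (‖p‖ ^ 2)) * (ε / ((‖p‖ ^ 2 - 1) ^ 2 + ε ^ 2)) := by
      rw [hErr]
      exact (setIntegral_eq_integral_of_forall_compl_eq_zero hzero).symm
    rw [heq, ← Real.norm_eq_abs]
    have := norm_setIntegral_le_of_norm_le_const (μ := volume) (s := K)
      hKc.measure_lt_top hbound
    exact this
  have hErr0 : Tendsto Err (nhdsWithin 0 (Set.Ioi 0)) (nhds 0) := by
    have hC : Tendsto (fun ε : ℝ => ε / b ^ 2 * V) (nhdsWithin 0 (Set.Ioi 0)) (nhds 0) := by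
      have h1 : Tendsto (fun ε : ℝ => ε / b ^ 2 * V) (nhds 0) (nhds (0 / b ^ 2 * V)) :=
        ((continuous_id.div_const _).mul continuous_const).tendsto 0
      simpa using h1.mono_left nhdsWithin_le_nhds
    have hCneg : Tendsto (fun ε : ℝ => -(ε / b ^ 2 * V)) (nhdsWithin 0 (Set.Ioi 0)) (nhds 0) := by
      simpa using hC.neg
    apply tendsto_of_tendsto_of_tendsto_of_le_of_le' hCneg hC
    · filter_upwards [self_mem_nhdsWithin] with ε hε
      exact neg_le_of_abs_le (hErrbound ε hε)
    · filter_upwards [self_mem_nhdsWithin] with ε hε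
      exact le_of_abs_le (hErrbound ε hε)
  have hRadlim : Tendsto Rad (nhdsWithin 0 (Set.Ioi 0)) (nhds (π * π)) := by
    have h1 := poisson_limit ψ hψc 1
      (fun x => abs_le.2 ⟨by linarith [hψnn x], hψle x⟩)
    have h2 := h1.const_mul π
    rw [hψ1, mul_one] at h2
    have h3 : Rad = fun ε : ℝ => π * ∫ u : ℝ, ψ u * (ε / ((u - 1) ^ 2 + ε ^ 2)) := by
      funext ε
      exact radial_eq ψ hψzero' ε
    rw [h3]
    exact h2
  have hfinal : Tendsto (fun ε => Rad ε + Err ε) (nhdsWithin 0 (Set.Ioi 0))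
      (nhds (π ^ 2)) := by
    have := hRadlim.add hErr0
    rw [add_zero] at this
    rw [show π ^ 2 = π * π from sq π]
    exact this
  apply hfinal.congr'
  filter_upwards [self_mem_nhdsWithin] with ε hε
  rw [im_eq κ hκcont hκc ε hε, hsplit ε hε]
end
end

section
/- Let z_s denote the unique real root of 4z³ − 5z² + 3z − 1 (which lies in (1/2,1)). Consider real variables (a_0, b_0, V_0) with F_b := (b_0 + 1)² + V_0² > 0, and set x := a_0 + V_0. Then the system of equations a_0 + x/(x² + 1) = 0, (b_0 + 1)·(1 − 1/F_b) = 0, V_0·(1 − 1/F_b) + x/(1 + x²) = 0 holds if and only if (a_0, b_0, V_0) is one of the four points: S_1 = (0, 0, 0); S_2 = (0, −2, 0); S_3 = ((z_s − 1)/√z_s, −1, √z_s); S_4 = (−(z_s − 1)/√z_s, −1, −√z_s). -/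
/-!
With `x = a₀ + V₀`, the first equation says `x / (1 + x²) = -a₀`, so the third one becomes
`a₀ = V₀ (1 - 1/F_b)`. If `b₀ ≠ -1`, the second equation forces `F_b = 1`; then `a₀ = 0`, hence
`x = 0`, `V₀ = 0` and `(b₀ + 1)² = 1`. If `b₀ = -1`, then `F_b = V₀²` and `a₀ V₀ = V₀² - 1`, and
under this relation `V₀³ (a₀ (x² + 1) + x) = p(V₀²)` for `p z = 4z³ - 5z² + 3z - 1`. As `p` is
strictly increasing, the first equation holds exactly when `V₀² = z_s`.
-/

def flipCubic (z : ℝ) : ℝ := 4 * z ^ 3 - 5 * z ^ 2 + 3 * z - 1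

lemma flipCubic_sub_flipCubic (y z : ℝ) :
    flipCubic y - flipCubic z = (y - z) * (4 * (y ^ 2 + y * z + z ^ 2) - 5 * (y + z) + 3) := by
  unfold flipCubic
  ring

lemma flipCubic_slope_pos (y z : ℝ) : 0 < 4 * (y ^ 2 + y * z + z ^ 2) - 5 * (y + z) + 3 := by
  nlinarith [sq_nonneg (y - z), sq_nonneg (3 * (y + z) - 5 / 2)]

lemma flipCubic_strictMono : StrictMono flipCubic := fun y z hyz => by
  have := mul_pos (sub_pos.2 hyz) (flipCubic_slope_pos z y)
  linarith [flipCubic_sub_flipCubic z y]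

lemma pos_of_flipCubic_eq_zero {z : ℝ} (hz : flipCubic z = 0) : 0 < z :=
  flipCubic_strictMono.lt_iff_lt.1 (by rw [hz]; norm_num [flipCubic])

lemma pow_three_mul_eq_flipCubic_sq {a V : ℝ} (h : a * V = V ^ 2 - 1) :
    V ^ 3 * (a * ((a + V) ^ 2 + 1) + (a + V)) = flipCubic (V ^ 2) := by
  unfold flipCubic
  linear_combination (a ^ 2 * V ^ 2 + 3 * a * V ^ 3 - a * V + 4 * V ^ 4 - 2 * V ^ 2 + 1) * h

def SaddleSystem (a b V : ℝ) : Prop :=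
  a + (a + V) / ((a + V) ^ 2 + 1) = 0 ∧
    (b + 1) * (1 - 1 / ((b + 1) ^ 2 + V ^ 2)) = 0 ∧
    V * (1 - 1 / ((b + 1) ^ 2 + V ^ 2)) + (a + V) / (1 + (a + V) ^ 2) = 0

lemma saddleSystem_iff {a b V : ℝ} :
    SaddleSystem a b V ↔
      a + (a + V) / ((a + V) ^ 2 + 1) = 0 ∧
        (b + 1) * (1 - 1 / ((b + 1) ^ 2 + V ^ 2)) = 0 ∧
        a = V * (1 - 1 / ((b + 1) ^ 2 + V ^ 2)) := by
  rw [SaddleSystem, add_comm 1 ((a + V) ^ 2)]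
  constructor <;> rintro ⟨h₁, h₂, h₃⟩ <;> exact ⟨h₁, h₂, by linarith⟩

lemma saddleSystem_iff_of_ne_neg_one {a b V : ℝ} (hb : b ≠ -1) :
    SaddleSystem a b V ↔ a = 0 ∧ V = 0 ∧ (b = 0 ∨ b = -2) := by
  have hb' : b + 1 ≠ 0 := by contrapose! hb; linarith
  rw [saddleSystem_iff]
  constructor
  · rintro ⟨h₁, h₂, h₃⟩
    have hF : (b + 1) ^ 2 + V ^ 2 = 1 := by
      have := (mul_eq_zero.1 h₂).resolve_left hb'
      rwa [sub_eq_zero, eq_comm, one_div, inv_eq_one] at this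
    have ha : a = 0 := by simpa [hF] using h₃
    have hV : V = 0 := by
      simpa [ha, (by positivity : V ^ 2 + 1 ≠ 0)] using h₁
    subst ha hV
    have hb₀ : b * (b + 2) = 0 := by linear_combination hF
    refine ⟨rfl, rfl, (mul_eq_zero.1 hb₀).imp id eq_neg_of_add_eq_zero_left⟩
  · rintro ⟨rfl, rfl, rfl | rfl⟩ <;> norm_num

lemma saddleSystem_neg_one_iff {a V : ℝ} (hV : V ≠ 0) :
    SaddleSystem a (-1) V ↔ a * V = V ^ 2 - 1 ∧ flipCubic (V ^ 2) = 0 := by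
  have hrel : a = V * (1 - 1 / V ^ 2) ↔ a * V = V ^ 2 - 1 := by
    field_simp
  have heq : a + (a + V) / ((a + V) ^ 2 + 1) = 0 ↔ a * ((a + V) ^ 2 + 1) + (a + V) = 0 := by
    have : (a + V) ^ 2 + 1 ≠ 0 := by positivity
    rw [add_div' _ _ _ this, div_eq_zero_iff, or_iff_left this]
  simp only [saddleSystem_iff, neg_add_cancel, zero_mul, true_and, zero_pow two_ne_zero, zero_add,
    hrel, heq]
  rw [and_comm]
  refine and_congr_right fun h => ?_
  rw [← pow_three_mul_eq_flipCubic_sq h, mul_eq_zero, or_iff_right (pow_ne_zero 3 hV)]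

lemma mul_eq_sq_sub_one_and_sq_eq_iff {a V z : ℝ} (hz : 0 < z) :
    a * V = V ^ 2 - 1 ∧ V ^ 2 = z ↔
      a = (z - 1) / √z ∧ V = √z ∨ a = -((z - 1) / √z) ∧ V = -√z := by
  have hs : √z ^ 2 = z := Real.sq_sqrt hz.le
  have hs₀ : √z ≠ 0 := (Real.sqrt_pos.2 hz).ne'
  constructor
  · rintro ⟨haV, hVz⟩
    rcases sq_eq_sq_iff_eq_or_eq_neg.1 (hVz.trans hs.symm) with rfl | rfl
    · exact .inl ⟨eq_div_of_mul_eq hs₀ (by rw [haV, hs]), rfl⟩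
    · refine .inr ⟨?_, rfl⟩
      rw [neg_sq, hs] at haV
      rw [eq_neg_iff_add_eq_zero, ← haV]
      field_simp
      ring
  · rintro (⟨rfl, rfl⟩ | ⟨rfl, rfl⟩)
    · exact ⟨by field_simp; rw [hs], hs⟩
    · exact ⟨by field_simp; rw [hs], by rw [neg_sq, hs]⟩

/-- let `z_s` be the unique real root of `4z³ - 5z² + 3z - 1`
(it lies in `(1/2, 1)`). For real `(a₀, b₀, V₀)` with
`F_b = (b₀+1)² + V₀² > 0` and `x = a₀ + V₀`, the saddle point system
`a₀ + x/(x²+1) = 0`, `(b₀+1)(1 - 1/F_b) = 0`, `V₀(1 - 1/F_b) + x/(1+x²) = 0`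
holds iff `(a₀, b₀, V₀)` is one of the four critical points
`S₁ = (0,0,0)`, `S₂ = (0,-2,0)`, `S₃ = ((z_s-1)/√z_s, -1, √z_s)`,
`S₄ = (-(z_s-1)/√z_s, -1, -√z_s)`. -/
theorem flip_saddle_points (zs : ℝ)
    (hzs : 4 * zs ^ 3 - 5 * zs ^ 2 + 3 * zs - 1 = 0)
    (a0 b0 V0 : ℝ) (hFb : 0 < (b0 + 1) ^ 2 + V0 ^ 2) :
    (a0 + (a0 + V0) / ((a0 + V0) ^ 2 + 1) = 0 ∧
     (b0 + 1) * (1 - 1 / ((b0 + 1) ^ 2 + V0 ^ 2)) = 0 ∧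
     V0 * (1 - 1 / ((b0 + 1) ^ 2 + V0 ^ 2)) +
       (a0 + V0) / (1 + (a0 + V0) ^ 2) = 0) ↔
    ((a0, b0, V0) = (0, 0, 0) ∨
     (a0, b0, V0) = (0, -2, 0) ∨
     (a0, b0, V0) = ((zs - 1) / Real.sqrt zs, -1, Real.sqrt zs) ∨
     (a0, b0, V0) = (-((zs - 1) / Real.sqrt zs), -1, -Real.sqrt zs)) := by
  change SaddleSystem a0 b0 V0 ↔ _
  simp only [Prod.mk.injEq]
  by_cases hb : b0 = -1
  · subst hb
    have hV : V0 ≠ 0 := by rintro rfl; norm_num at hFb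
    have hcubic : flipCubic (V0 ^ 2) = 0 ↔ V0 ^ 2 = zs :=
      flipCubic_strictMono.injective.eq_iff' hzs
    rw [saddleSystem_neg_one_iff hV, hcubic,
      mul_eq_sq_sub_one_and_sq_eq_iff (pos_of_flipCubic_eq_zero hzs)]
    norm_num
  · rw [saddleSystem_iff_of_ne_neg_one hb]
    norm_num [hb]
    tauto
end

section
/- Define, for (a_0, b_0, a, V_0) ∈ ℝ × ℝ × ℂ × ℝ with F_b := (b_0 + 1)² + V_0² > 0, the function ReS(a_0, b_0, a, V_0) = a_0² + b_0² + 2b_0 + |a|² + V_0² + (1/2)·ln F_a − ln F_b, where x := a_0 + V_0 and F_a := x²(x² + 2(1 − |a|²)) + (1 + |a|²)² (note F_a > 0 for all arguments). Then the critical points of ReS (the points where its gradient, as a function of the five real variables a_0, b_0, Re a, Im a, V_0, vanishes) are exactly the four points with a = 0 and (a_0, b_0, V_0) ∈ { (0,0,0), (0,−2,0), ((z_s−1)/√z_s, −1, √z_s), (−(z_s−1)/√z_s, −1, −√z_s) }, where z_s is the unique real root of 4z³ − 5z² + 3z − 1. Moreover ReS = 0 at the first two critical points. -/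
/-!
With `x = a₀ + V₀` and `r = |a|²` one has `F_a = (x² - r)² + 2x² + 2r + 1 ≥ 1`, and the
derivative of `ReS` in `Re a`, `Im a` is `2a (F_a + 1 + r - x²) / F_a` with a positive factor,
so `a = 0` at a critical point. There `F_a = (x² + 1)²` and the remaining equations reduce to
`a₀ (x² + 1) + x = 0`, `(b₀ + 1)(F_b - 1) = 0` and `(V₀ - a₀) F_b = V₀`. The branch `F_b = 1`
forces `a₀ = V₀ = 0` and `b₀ ∈ {0, -2}`. The branch `b₀ = -1` gives `a₀ = V₀ - 1/V₀`, and then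
the first equation becomes `4V₀⁶ - 5V₀⁴ + 3V₀² - 1 = 0`: `V₀²` is a root of the cubic, which is
strictly increasing, so `V₀² = z_s`.
-/
noncomputable section

/-- The real part of the saddle point action of the flip matrix model at
`E = 0`, as a function of the five real variables
`(a₀, b₀, Re a, Im a, V₀)`:
`ReS = a₀² + b₀² + 2b₀ + |a|² + V₀² + (1/2) ln F_a - ln F_b`, where
`x = a₀ + V₀`, `F_a = x²(x² + 2(1 - |a|²)) + (1 + |a|²)²` and
`F_b = (b₀+1)² + V₀²`. -/
def ReS (p : ℝ × ℝ × ℝ × ℝ × ℝ) : ℝ :=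
  p.1 ^ 2 + p.2.1 ^ 2 + 2 * p.2.1 + (p.2.2.1 ^ 2 + p.2.2.2.1 ^ 2) +
      p.2.2.2.2 ^ 2 +
    (1 / 2) * Real.log
      ((p.1 + p.2.2.2.2) ^ 2 *
          ((p.1 + p.2.2.2.2) ^ 2 +
            2 * (1 - (p.2.2.1 ^ 2 + p.2.2.2.1 ^ 2))) +
        (1 + (p.2.2.1 ^ 2 + p.2.2.2.1 ^ 2)) ^ 2) -
    Real.log ((p.2.1 + 1) ^ 2 + p.2.2.2.2 ^ 2)

open ContinuousLinearMap Real

namespace FlipAction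

local notation "ℝ⁵" => ℝ × ℝ × ℝ × ℝ × ℝ

def Fa (x r : ℝ) : ℝ := x ^ 2 * (x ^ 2 + 2 * (1 - r)) + (1 + r) ^ 2

def Fb (b V : ℝ) : ℝ := (b + 1) ^ 2 + V ^ 2

theorem Fa_eq_sq_add (x r : ℝ) : Fa x r = (x ^ 2 - r) ^ 2 + 2 * x ^ 2 + 2 * r + 1 := by
  unfold Fa; ring

theorem Fa_pos (x : ℝ) {r : ℝ} (hr : 0 ≤ r) : 0 < Fa x r := by
  rw [Fa_eq_sq_add]; positivity

theorem Fa_zero (x : ℝ) : Fa x 0 = (x ^ 2 + 1) ^ 2 := by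
  unfold Fa; ring

-- Built from the coordinate projections, so that it matches their derivatives on the nose.
def dotCLM (g : ℝ⁵) : ℝ⁵ →L[ℝ] ℝ :=
  g.1 • fst ℝ ℝ _ + g.2.1 • (fst ℝ ℝ _).comp (snd ℝ ℝ _) +
    g.2.2.1 • (fst ℝ ℝ _).comp ((snd ℝ ℝ _).comp (snd ℝ ℝ _)) +
    g.2.2.2.1 • (fst ℝ ℝ _).comp ((snd ℝ ℝ _).comp ((snd ℝ ℝ _).comp (snd ℝ ℝ _))) +
    g.2.2.2.2 • (snd ℝ ℝ _).comp ((snd ℝ ℝ _).comp ((snd ℝ ℝ _).comp (snd ℝ ℝ _)))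

@[simp]
theorem dotCLM_apply (g w : ℝ⁵) :
    dotCLM g w = g.1 * w.1 + g.2.1 * w.2.1 + g.2.2.1 * w.2.2.1 + g.2.2.2.1 * w.2.2.2.1 +
      g.2.2.2.2 * w.2.2.2.2 :=
  rfl

theorem dotCLM_eq_zero_iff (g : ℝ⁵) : dotCLM g = 0 ↔ g = 0 := by
  refine ⟨fun h => ?_, fun h => ContinuousLinearMap.ext fun w => by simp [h]⟩
  have h1 := congr($h (1, 0, 0, 0, 0))
  have h2 := congr($h (0, 1, 0, 0, 0))
  have h3 := congr($h (0, 0, 1, 0, 0))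
  have h4 := congr($h (0, 0, 0, 1, 0))
  have h5 := congr($h (0, 0, 0, 0, 1))
  simp only [dotCLM_apply, zero_apply] at h1 h2 h3 h4 h5
  ext <;> simp_all

def gradReS : ℝ⁵ → ℝ⁵
  | (a, b, u, v, V) =>
    (2 * a + 2 * (a + V) * ((a + V) ^ 2 + 1 - (u ^ 2 + v ^ 2)) / Fa (a + V) (u ^ 2 + v ^ 2),
      2 * (b + 1) - 2 * (b + 1) / Fb b V,
      2 * u + 2 * u * (1 + (u ^ 2 + v ^ 2) - (a + V) ^ 2) / Fa (a + V) (u ^ 2 + v ^ 2),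
      2 * v + 2 * v * (1 + (u ^ 2 + v ^ 2) - (a + V) ^ 2) / Fa (a + V) (u ^ 2 + v ^ 2),
      2 * V + 2 * (a + V) * ((a + V) ^ 2 + 1 - (u ^ 2 + v ^ 2)) / Fa (a + V) (u ^ 2 + v ^ 2) -
        2 * V / Fb b V)

theorem hasFDerivAt_ReS {a b u v V : ℝ} (hb : Fb b V ≠ 0) :
    HasFDerivAt ReS (dotCLM (gradReS (a, b, u, v, V))) (a, b, u, v, V) := by
  set p : ℝ⁵ := (a, b, u, v, V)
  have ha₀ : HasFDerivAt (fun q : ℝ⁵ => q.1) (fst ℝ ℝ _) p := hasFDerivAt_fst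
  have hb₀ : HasFDerivAt (fun q : ℝ⁵ => q.2.1) ((fst ℝ ℝ _).comp (snd ℝ ℝ _)) p :=
    hasFDerivAt_fst.comp p hasFDerivAt_snd
  have hu : HasFDerivAt (fun q : ℝ⁵ => q.2.2.1)
      ((fst ℝ ℝ _).comp ((snd ℝ ℝ _).comp (snd ℝ ℝ _))) p :=
    hasFDerivAt_fst.comp p (hasFDerivAt_snd.comp p hasFDerivAt_snd)
  have hv : HasFDerivAt (fun q : ℝ⁵ => q.2.2.2.1)
      ((fst ℝ ℝ _).comp ((snd ℝ ℝ _).comp ((snd ℝ ℝ _).comp (snd ℝ ℝ _)))) p :=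
    hasFDerivAt_fst.comp p (hasFDerivAt_snd.comp p (hasFDerivAt_snd.comp p hasFDerivAt_snd))
  have hV₀ : HasFDerivAt (fun q : ℝ⁵ => q.2.2.2.2)
      ((snd ℝ ℝ _).comp ((snd ℝ ℝ _).comp ((snd ℝ ℝ _).comp (snd ℝ ℝ _)))) p :=
    hasFDerivAt_snd.comp p (hasFDerivAt_snd.comp p (hasFDerivAt_snd.comp p hasFDerivAt_snd))
  have hx := ha₀.add hV₀
  have hr := (hu.pow 2).add (hv.pow 2)
  have hFa : HasFDerivAt (fun q : ℝ⁵ => Fa (q.1 + q.2.2.2.2) (q.2.2.1 ^ 2 + q.2.2.2.1 ^ 2)) _ p :=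
    ((hx.pow 2).mul ((hx.pow 2).add (((hasFDerivAt_const 1 p).sub hr).const_mul 2))).add
      (((hasFDerivAt_const 1 p).add hr).pow 2)
  have hFb : HasFDerivAt (fun q : ℝ⁵ => Fb q.2.1 q.2.2.2.2) _ p :=
    ((hb₀.add_const 1).pow 2).add (hV₀.pow 2)
  have hS := (((((ha₀.pow 2).add (hb₀.pow 2)).add (hb₀.const_mul 2)).add hr).add (hV₀.pow 2)).add
      ((hFa.log (Fa_pos _ (by positivity)).ne').const_mul (1 / 2)) |>.sub (hFb.log hb)
  refine hS.congr_fderiv (ContinuousLinearMap.ext fun w => ?_)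
  have hFa_ne := (Fa_pos (a + V) (by positivity : 0 ≤ u ^ 2 + v ^ 2)).ne'
  simp only [gradReS, dotCLM_apply, p, zero_apply, add_apply, sub_apply, smul_apply, comp_apply,
    coe_fst', coe_snd', smul_eq_mul, nsmul_eq_mul, Pi.add_apply, Pi.sub_apply]
  field_simp
  ring

theorem fderiv_ReS_eq_zero_iff {a b u v V : ℝ} (hb : Fb b V ≠ 0) :
    fderiv ℝ ReS (a, b, u, v, V) = 0 ↔ gradReS (a, b, u, v, V) = 0 := by
  rw [(hasFDerivAt_ReS hb).fderiv, dotCLM_eq_zero_iff]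

theorem cooper_component_eq_zero_iff (x : ℝ) {r : ℝ} (hr : 0 ≤ r) (u : ℝ) :
    2 * u + 2 * u * (1 + r - x ^ 2) / Fa x r = 0 ↔ u = 0 := by
  have hFa := Fa_pos x hr
  have hfactor : 0 < Fa x r + (1 + r - x ^ 2) := by
    rw [Fa_eq_sq_add]; nlinarith [sq_nonneg (x ^ 2 - r), sq_nonneg x]
  rw [show 2 * u + 2 * u * (1 + r - x ^ 2) / Fa x r =
      2 * u * ((Fa x r + (1 + r - x ^ 2)) / Fa x r) by field_simp]
  simp [hFa.ne', hfactor.ne']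

theorem gradReS_at_zero_cooper_field {a b V : ℝ} (hb : Fb b V ≠ 0) :
    gradReS (a, b, 0, 0, V) =
      (2 * (a * ((a + V) ^ 2 + 1) + (a + V)) / ((a + V) ^ 2 + 1),
        2 * ((b + 1) * (Fb b V - 1)) / Fb b V, 0, 0,
        2 * (a * ((a + V) ^ 2 + 1) + (a + V)) / ((a + V) ^ 2 + 1) +
          2 * ((V - a) * Fb b V - V) / Fb b V) := by
  have hx : (a + V) ^ 2 + 1 ≠ 0 := by positivity
  simp only [gradReS, Prod.mk.injEq, ne_eq, OfNat.ofNat_ne_zero, not_false_eq_true, zero_pow,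
    add_zero, sub_zero, mul_zero, zero_mul, zero_div, Fa_zero, true_and]
  refine ⟨by field_simp, by field_simp, by field_simp; ring⟩

theorem gradReS_eq_zero_iff {a b u v V : ℝ} (hb : Fb b V ≠ 0) :
    gradReS (a, b, u, v, V) = 0 ↔
      u = 0 ∧ v = 0 ∧ a * ((a + V) ^ 2 + 1) + (a + V) = 0 ∧ (b + 1) * (Fb b V - 1) = 0 ∧
        (V - a) * Fb b V = V := by
  have hx : (a + V) ^ 2 + 1 ≠ 0 := by positivity
  constructor
  · intro h
    obtain ⟨rfl, rfl⟩ : u = 0 ∧ v = 0 := by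
      have hr : 0 ≤ u ^ 2 + v ^ 2 := by positivity
      simp only [gradReS, Prod.mk_eq_zero, cooper_component_eq_zero_iff _ hr] at h
      exact ⟨h.2.2.1, h.2.2.2.1⟩
    simp only [gradReS_at_zero_cooper_field hb, Prod.mk_eq_zero, div_eq_zero_iff, mul_eq_zero, hb, hx,
      OfNat.ofNat_ne_zero, false_or, or_false] at h
    obtain ⟨ha, hb', -, -, hV⟩ := h
    refine ⟨rfl, rfl, ha, mul_eq_zero.mpr hb', ?_⟩
    simpa [ha, hb, sub_eq_zero] using hV
  · rintro ⟨rfl, rfl, ha, hb', hV⟩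
    simp [gradReS_at_zero_cooper_field hb, ha, hb', hV]

def flipCubic (z : ℝ) : ℝ := 4 * z ^ 3 - 5 * z ^ 2 + 3 * z - 1

theorem flipCubic_strictMono : StrictMono flipCubic := by
  intro z w hzw
  have hq : 0 < 4 * (z ^ 2 + z * w + w ^ 2) - 5 * (z + w) + 3 := by
    nlinarith [sq_nonneg (z - w), sq_nonneg (6 * z + 6 * w - 5)]
  have : flipCubic w - flipCubic z = (w - z) * (4 * (z ^ 2 + z * w + w ^ 2) - 5 * (z + w) + 3) := by
    unfold flipCubic; ring
  nlinarith [mul_pos (sub_pos.2 hzw) hq]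

theorem flipCubic_root_pos {z : ℝ} (hz : flipCubic z = 0) : 0 < z :=
  flipCubic_strictMono.lt_iff_lt.mp (by rw [hz]; norm_num [flipCubic])

theorem critical_system_iff {a b V : ℝ} (hb : Fb b V ≠ 0) :
    (a * ((a + V) ^ 2 + 1) + (a + V) = 0 ∧ (b + 1) * (Fb b V - 1) = 0 ∧ (V - a) * Fb b V = V) ↔
      (a = 0 ∧ V = 0 ∧ (b = 0 ∨ b = -2)) ∨
        (b = -1 ∧ a = (V ^ 2 - 1) / V ∧ flipCubic (V ^ 2) = 0) := by
  constructor
  · rintro ⟨ha, hb', hV⟩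
    rcases mul_eq_zero.mp hb' with hb₁ | hF
    · obtain rfl : b = -1 := by linarith
      have hFb : Fb (-1) V = V ^ 2 := by norm_num [Fb]
      rw [hFb] at hb hV
      have hV₀ : V ≠ 0 := by simpa using hb
      have ha_eq : a = (V ^ 2 - 1) / V := by
        have := mul_left_cancel₀ hV₀ (show V * ((V - a) * V) = V * 1 by linear_combination hV)
        rw [eq_div_iff hV₀]
        linear_combination -this
      refine Or.inr ⟨rfl, ha_eq, ?_⟩
      rw [ha_eq] at ha
      field_simp at ha
      unfold flipCubic
      linear_combination ha
    · rw [sub_eq_zero.mp hF] at hV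
      obtain rfl : a = 0 := by linarith
      obtain rfl : V = 0 := by linarith
      refine Or.inl ⟨rfl, rfl, ?_⟩
      have : b * (b + 2) = 0 := by simp only [Fb] at hF; linear_combination hF
      rcases mul_eq_zero.mp this with h | h
      · exact Or.inl h
      · exact Or.inr (by linarith)
  · rintro (⟨rfl, rfl, rfl | rfl⟩ | ⟨rfl, rfl, hs⟩)
    · norm_num [Fb]
    · norm_num [Fb]
    · have hV₀ : V ≠ 0 := by rintro rfl; norm_num [flipCubic] at hs
      simp only [Fb, flipCubic] at hs ⊢
      refine ⟨?_, by ring, ?_⟩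
      · field_simp
        linear_combination hs
      · field_simp
        ring

theorem critical_branch_iff_sqrt {zs : ℝ} (hzs : flipCubic zs = 0) (a V : ℝ) :
    (a = (V ^ 2 - 1) / V ∧ flipCubic (V ^ 2) = 0) ↔
      (a = (zs - 1) / √zs ∧ V = √zs) ∨ (a = -((zs - 1) / √zs) ∧ V = -√zs) := by
  have hsqrt : √zs ^ 2 = zs := Real.sq_sqrt (flipCubic_root_pos hzs).le
  have hV : flipCubic (V ^ 2) = 0 ↔ V = √zs ∨ V = -√zs := by
    rw [← sq_eq_sq_iff_eq_or_eq_neg, hsqrt, ← hzs]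
    exact flipCubic_strictMono.injective.eq_iff
  rw [hV]
  constructor
  · rintro ⟨rfl, rfl | rfl⟩ <;> simp [hsqrt, div_neg]
  · rintro (⟨rfl, rfl⟩ | ⟨rfl, rfl⟩) <;> simp [hsqrt, div_neg]

end FlipAction

open FlipAction

/-- on the domain `F_b > 0`, the critical points of `ReS`
(vanishing gradient in the five real variables) are exactly the four points
with `a = 0` and `(a₀, b₀, V₀) ∈ {(0,0,0), (0,-2,0),
((z_s-1)/√z_s, -1, √z_s), (-(z_s-1)/√z_s, -1, -√z_s)}`, where `z_s` is the
unique real root of `4z³ - 5z² + 3z - 1`; moreover `ReS` vanishes at the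
first two critical points. -/
theorem flip_action_critical_points (zs : ℝ)
    (hzs : 4 * zs ^ 3 - 5 * zs ^ 2 + 3 * zs - 1 = 0) :
    (∀ p : ℝ × ℝ × ℝ × ℝ × ℝ, 0 < (p.2.1 + 1) ^ 2 + p.2.2.2.2 ^ 2 →
      (fderiv ℝ ReS p = 0 ↔
        (p = (0, 0, 0, 0, 0) ∨ p = (0, -2, 0, 0, 0) ∨
         p = ((zs - 1) / Real.sqrt zs, -1, 0, 0, Real.sqrt zs) ∨
         p = (-((zs - 1) / Real.sqrt zs), -1, 0, 0, -Real.sqrt zs)))) ∧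
    ReS (0, 0, 0, 0, 0) = 0 ∧ ReS (0, -2, 0, 0, 0) = 0 := by
  refine ⟨fun ⟨a, b, u, v, V⟩ hFb => ?_, by norm_num [ReS], by norm_num [ReS]⟩
  have hb : Fb b V ≠ 0 := hFb.ne'
  rw [fderiv_ReS_eq_zero_iff hb, gradReS_eq_zero_iff hb, critical_system_iff hb,
    critical_branch_iff_sqrt hzs]
  simp only [Prod.mk.injEq]
  tauto
end
end

section
/- For every real z with 1/2 < z < 1, one has (2z − 1)(z − 1)/z + ln((4z² − z + 1)/z²) > −1/4 + ln(3/2) > 0.15. -/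
open Real

-- Cleared of `z`, this is `0 < 8z² - 11z + 4 = 8(z - 11/16)² + 7/32`.
lemma neg_one_fourth_lt_two_mul_sub_one_mul_sub_one_div {z : ℝ} (hz : 0 < z) :
    -(1 / 4) < (2 * z - 1) * (z - 1) / z := by
  rw [lt_div_iff₀ hz]
  nlinarith [sq_nonneg (z - 11 / 16)]

lemma three_halves_le_four_mul_sq_sub_add_one_div_sq {z : ℝ} (hz : z ≠ 0) :
    3 / 2 ≤ (4 * z ^ 2 - z + 1) / z ^ 2 := by
  rw [le_div_iff₀ (by positivity)]
  nlinarith [sq_nonneg (5 * z - 1)]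

-- `exp (2/5) ^ 5 = e² < 7.39 < 7.59375 = (3/2) ^ 5`.
lemma Real.two_fifths_lt_log_three_halves : 2 / 5 < log (3 / 2) := by
  rw [lt_log_iff_exp_lt (by norm_num)]
  have hpow : exp (2 / 5) ^ 5 < (3 / 2) ^ 5 := by
    rw [← exp_nat_mul, show ((5 : ℕ) : ℝ) * (2 / 5) = 1 + 1 by norm_num, exp_add]
    nlinarith [exp_one_lt_d9, exp_pos 1]
  exact lt_of_pow_lt_pow_left₀ 5 (by norm_num) hpow

theorem saddle_action_lower_bound_general (z : ℝ) (h1 : 1 / 2 < z) :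
    (2 * z - 1) * (z - 1) / z + Real.log ((4 * z ^ 2 - z + 1) / z ^ 2) >
      -(1 / 4) + Real.log (3 / 2) ∧
    -(1 / 4) + Real.log (3 / 2) > 0.15 := by
  have hz : 0 < z := by linarith
  constructor
  · have hlog : log (3 / 2) ≤ log ((4 * z ^ 2 - z + 1) / z ^ 2) :=
      log_le_log (by norm_num) (three_halves_le_four_mul_sq_sub_add_one_div_sq hz.ne')
    linarith [neg_one_fourth_lt_two_mul_sub_one_mul_sub_one_div hz]
  · linarith [two_fifths_lt_log_three_halves]

/-- for every real `z` with `1/2 < z < 1`,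
`(2z-1)(z-1)/z + ln((4z² - z + 1)/z²) > -1/4 + ln(3/2) > 0.15`. -/
theorem saddle_action_lower_bound (z : ℝ) (h1 : 1 / 2 < z) (h2 : z < 1) :
    (2 * z - 1) * (z - 1) / z + Real.log ((4 * z ^ 2 - z + 1) / z ^ 2) >
      -(1 / 4) + Real.log (3 / 2) ∧
    -(1 / 4) + Real.log (3 / 2) > 0.15 :=
  saddle_action_lower_bound_general z h1
end

section
/- Let E be real with E² < 2, and set ℰ_r = E/2 and ℰ_i = √(1 − E²/4). Then the real symmetric 4×4 matrix H = [[2ℰ_i², 0, ℰ_i² − ℰ_r², 0], [0, 2ℰ_i², 2ℰ_rℰ_i, 0], [ℰ_i² − ℰ_r², 2ℰ_rℰ_i, 1, 0], [0, 0, 0, 2ℰ_i²]] is positive definite. -/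
/-!
The matrix has the shape `[[a, 0, p, 0], [0, a, q, 0], [p, q, b, 0], [0, 0, 0, a]]`, and such a
matrix is positive definite as soon as `0 < a` and `p² + q² < a b`: after multiplying by `a`, its
quadratic form completes to `(a x₀ + p x₂)² + (a x₁ + q x₂)² + (a b - p² - q²) x₂² + a² x₃²`.
Here `a = 2ℰ_i² = 2 - E²/2`, `b = 1`, and `p² + q² = (ℰ_i² + ℰ_r²)² = 1`, so the condition is `E² < 2`.
-/

open Matrix

theorem Matrix.posDef_arrowhead_four {a b p q : ℝ} (ha : 0 < a) (h : p ^ 2 + q ^ 2 < a * b) :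
    PosDef !![a, 0, p, 0; 0, a, q, 0; p, q, b, 0; 0, 0, 0, a] := by
  refine .of_dotProduct_mulVec_pos ?_ fun x hx => ?_
  · ext i j
    fin_cases i <;> fin_cases j <;> simp
  have hform : a * (star x ⬝ᵥ !![a, 0, p, 0; 0, a, q, 0; p, q, b, 0; 0, 0, 0, a] *ᵥ x) =
      (a * x 0 + p * x 2) ^ 2 + (a * x 1 + q * x 2) ^ 2 + (a * b - p ^ 2 - q ^ 2) * x 2 ^ 2
        + a ^ 2 * x 3 ^ 2 := by
    simp only [dotProduct, Pi.star_apply, star_trivial, mulVec, of_apply, cons_val',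
      cons_val_fin_one, Fin.sum_univ_four, cons_val_zero, cons_val_one, cons_val]
    ring
  refine pos_of_mul_pos_right (hform ▸ ?_) ha.le
  have hab : 0 < a * b - p ^ 2 - q ^ 2 := by linarith
  rcases eq_or_ne (x 2) 0 with h2 | h2
  · have hx' : x 0 ≠ 0 ∨ x 1 ≠ 0 ∨ x 3 ≠ 0 := by
      contrapose! hx
      ext i
      fin_cases i <;> simp [*]
    simp only [h2, mul_zero, add_zero, ne_eq, OfNat.ofNat_ne_zero, not_false_eq_true, zero_pow]
    rcases hx' with h | h | h <;> positivity
  · positivity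

/-- for real `E` with `E² < 2`, setting `ℰ_r = E/2` and
`ℰ_i = √(1 - E²/4)`, the real symmetric 4×4 Hessian matrix
`[[2ℰ_i², 0, ℰ_i² - ℰ_r², 0], [0, 2ℰ_i², 2ℰ_rℰ_i, 0],
[ℰ_i² - ℰ_r², 2ℰ_rℰ_i, 1, 0], [0, 0, 0, 2ℰ_i²]]` is positive definite. -/
theorem hessian_posDef (E : ℝ) (hE : E ^ 2 < 2) :
    Matrix.PosDef
      (!![2 * Real.sqrt (1 - E ^ 2 / 4) ^ 2, 0,
            Real.sqrt (1 - E ^ 2 / 4) ^ 2 - (E / 2) ^ 2, 0;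
          0, 2 * Real.sqrt (1 - E ^ 2 / 4) ^ 2,
            2 * (E / 2) * Real.sqrt (1 - E ^ 2 / 4), 0;
          Real.sqrt (1 - E ^ 2 / 4) ^ 2 - (E / 2) ^ 2,
            2 * (E / 2) * Real.sqrt (1 - E ^ 2 / 4), 1, 0;
          0, 0, 0, 2 * Real.sqrt (1 - E ^ 2 / 4) ^ 2]) := by
  have hs : Real.sqrt (1 - E ^ 2 / 4) ^ 2 = 1 - E ^ 2 / 4 := Real.sq_sqrt (by linarith)
  have hunit : (Real.sqrt (1 - E ^ 2 / 4) ^ 2 - (E / 2) ^ 2) ^ 2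
      + (2 * (E / 2) * Real.sqrt (1 - E ^ 2 / 4)) ^ 2 = 1 := by
    linear_combination (Real.sqrt (1 - E ^ 2 / 4) ^ 2 + (E / 2) ^ 2 + 1) * hs
  exact posDef_arrowhead_four (by rw [hs]; linarith) (by rw [hunit, hs]; linarith)
end
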